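/- Let n ≥ 1. There exists a constant C = C(n) > 0 such that for all α ∈ [0,1], all r ∈ ℕ with r ≥ 1, and all ℓ ∈ ℕ: Π_{r,c^{(ℓ)}}(α) ≤ C·2^{−r}·( cot(π/(2(2^n+1))) )^{r/n}. -/

import Mathlib

open Real MeasureTheory Filter

noncomputable section

/-- The perturbing sequence: `c j = 1` if `n ∣ j`, else `0`. -/
def pert (n j : ℕ) : ℕ := if n ∣ j then 1 else 0

/-- The lacunary trigonometric product `Π_{r,γ}(α) = ∏_{j<r} |cos(2^j α π + γ_j π/2)|`. -/
def PiProd (r : ℕ) (γ : ℕ → ℕ) (α : ℝ) : ℝ :=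
  ∏ j ∈ Finset.range r, |Real.cos (2 ^ j * α * π + γ j * π / 2)|

/-!
Cut the product into blocks of length `n`, each starting at an index `j` with `n ∣ j + ℓ`. If `x`
is the angle `2^j απ` at the start of a block, the block is `|sin x| ∏_{0<q<n} |cos 2^q x|`, which
telescopes to `|sin 2^n x| / (2^n |cos x|)`. So, up to the factor `2^{-n}` per block and a shift of
one index, the product of the blocks is a product of `|tan|` along `x, 2^n x, 2^{2n} x, …`.

With `N = 2^n` and `θ = π / (2 (N + 1))`, a factor `|tan y| > cot θ` and its successor satisfy
`|tan y · tan N y| ≤ cot² θ`: writing `y = π/2 - ψ` modulo `π`, this says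
`tan Nψ ≤ cot² θ · tan ψ` for `0 ≤ ψ ≤ θ`, which holds because
`cos 2θ · sin ((N + 1) ψ) - sin ((N - 1) ψ)` is concave on `[0, θ]` and vanishes at both ends.
Pairing every large factor with its successor bounds the product of `m` tangents by `2 cot^{m+1} θ`.
-/

open Finset

theorem Real.sin_two_pow_mul (u : ℝ) (J : ℕ) :
    sin (2 ^ J * u) = 2 ^ J * sin u * ∏ j ∈ range J, cos (2 ^ j * u) := by
  induction J with
  | zero => simp
  | succ J ih =>
    rw [pow_succ, mul_comm _ (2:ℝ), mul_assoc, sin_two_mul, ih, prod_range_succ]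
    ring

section Concavity

variable {N θ ψ : ℝ}

theorem concaveOn_cos_two_mul_mul_sin_sub_sin (hN : 2 ≤ N) (hθ : (N + 1) * θ = π / 2) :
    ConcaveOn ℝ (Set.Icc 0 θ) fun x => cos (2 * θ) * sin ((N + 1) * x) - sin ((N - 1) * x) := by
  have hg' : ∀ x, HasDerivAt (fun x => cos (2 * θ) * sin ((N + 1) * x) - sin ((N - 1) * x))
      (cos (2 * θ) * ((N + 1) * cos ((N + 1) * x)) - (N - 1) * cos ((N - 1) * x)) x := by
    intro x
    have h1 := ((hasDerivAt_id' x).const_mul (N + 1)).sin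
    have h2 := ((hasDerivAt_id' x).const_mul (N - 1)).sin
    exact ((h1.const_mul (cos (2 * θ))).sub h2).congr_deriv (by ring)
  have hg'' : ∀ x, HasDerivAt
      (fun x => cos (2 * θ) * ((N + 1) * cos ((N + 1) * x)) - (N - 1) * cos ((N - 1) * x))
      (-(cos (2 * θ) * (N + 1) ^ 2 * sin ((N + 1) * x)) + (N - 1) ^ 2 * sin ((N - 1) * x)) x := by
    intro x
    have h1 := ((hasDerivAt_id' x).const_mul (N + 1)).cos
    have h2 := ((hasDerivAt_id' x).const_mul (N - 1)).cos
    exact (((h1.const_mul (N + 1)).const_mul (cos (2 * θ))).sub (h2.const_mul (N - 1))).congr_deriv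
      (by ring)
  refine concaveOn_of_hasDerivWithinAt2_nonpos (convex_Icc 0 θ)
    (by fun_prop) (fun x _ => (hg' x).hasDerivWithinAt) (fun x _ => (hg'' x).hasDerivWithinAt) ?_
  rw [interior_Icc]
  rintro x ⟨hx₀, hxθ⟩
  -- `cos 2θ ≥ 1 - 2θ²` and `2 ((N + 1) θ)² = π² / 2 < 4N` give `(N - 1)² ≤ cos 2θ (N + 1)²`
  have hcos : 1 - 2 * θ ^ 2 ≤ cos (2 * θ) := by
    nlinarith [one_sub_sq_div_two_le_cos (x := 2 * θ)]
  have hcoef : (N - 1) ^ 2 ≤ cos (2 * θ) * (N + 1) ^ 2 := by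
    nlinarith [pi_lt_d2, pi_pos]
  have hle : sin ((N - 1) * x) ≤ sin ((N + 1) * x) :=
    sin_le_sin_of_le_of_le_pi_div_two (by nlinarith [pi_pos]) (by nlinarith) (by nlinarith)
  have hsin₀ : 0 ≤ sin ((N + 1) * x) :=
    sin_nonneg_of_nonneg_of_le_pi (by nlinarith) (by nlinarith [pi_pos])
  have hsin₁ : 0 ≤ sin ((N - 1) * x) :=
    sin_nonneg_of_nonneg_of_le_pi (by nlinarith) (by nlinarith [pi_pos])
  nlinarith

theorem sin_sub_one_mul_le (hN : 2 ≤ N) (hθ : (N + 1) * θ = π / 2) (hψ₀ : 0 ≤ ψ)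
    (hψθ : ψ ≤ θ) :
    sin ((N - 1) * ψ) ≤ cos (2 * θ) * sin ((N + 1) * ψ) := by
  have hθ₀ : 0 < θ := by nlinarith [pi_pos]
  have hθ' : (N - 1) * θ = π / 2 - 2 * θ := by linarith
  have := (concaveOn_cos_two_mul_mul_sin_sub_sin hN hθ).ge_on_segment
    (Set.left_mem_Icc.2 hθ₀.le) (Set.right_mem_Icc.2 hθ₀.le)
    (by rw [segment_eq_Icc hθ₀.le]; exact ⟨hψ₀, hψθ⟩)
  simp only [mul_zero, sin_zero, hθ, hθ', sin_pi_div_two, sin_pi_div_two_sub,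
    mul_one, sub_self, min_self] at this
  linarith

theorem cos_mul_sin_mul_le_cot_sq (hN : 2 ≤ N) (hθ : (N + 1) * θ = π / 2) (hψ₀ : 0 ≤ ψ)
    (hψθ : ψ ≤ θ) : cos ψ * sin (N * ψ) ≤ cot θ ^ 2 * (sin ψ * cos (N * ψ)) := by
  have hθ₀ : 0 < θ := by nlinarith [pi_pos]
  have hsinθ : 0 < sin θ := sin_pos_of_pos_of_lt_pi hθ₀ (by nlinarith [pi_pos])
  have h := sin_sub_one_mul_le hN hθ hψ₀ hψθ
  rw [sub_one_mul, add_one_mul, sin_sub, sin_add, cos_two_mul, cos_sq'] at h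
  rw [cot_eq_cos_div_sin, div_pow, div_mul_eq_mul_div, le_div_iff₀ (by positivity), cos_sq' θ]
  linarith

end Concavity

theorem Real.abs_sin_add_int_mul_pi (x : ℝ) (k : ℤ) : |sin (x + k * π)| = |sin x| := by
  rw [sin_add_int_mul_pi, abs_mul, abs_neg_one_zpow, one_mul]

theorem Real.abs_cos_add_int_mul_pi (x : ℝ) (k : ℤ) : |cos (x + k * π)| = |cos x| := by
  rw [cos_add_int_mul_pi, abs_mul, abs_neg_one_zpow, one_mul]

/-- `ψ` is the distance from `v` to `π / 2 + πℤ`; evenness of `N` keeps `N (π / 2 + πℤ) ⊆ πℤ`. -/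
theorem exists_mem_Icc_abs_sin_eq_cos {N : ℕ} (hN : Even N) (v : ℝ) :
    ∃ ψ ∈ Set.Icc 0 (π / 2), |sin v| = cos ψ ∧ |cos v| = sin ψ ∧
      |sin (N * v)| = |sin (N * ψ)| ∧ |cos (N * v)| = |cos (N * ψ)| := by
  obtain ⟨k, rfl⟩ := hN
  set j := round ((v - π / 2) / π)
  set t := v - π / 2 - j * π
  have ht : |t| ≤ π / 2 := by
    have hj := abs_sub_round ((v - π / 2) / π)
    have : t = ((v - π / 2) / π - j) * π := by field_simp; ring
    rw [this, abs_mul, abs_of_pos pi_pos]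
    nlinarith [pi_pos]
  have hsin : ∀ c : ℝ, |sin (c * t)| = |sin (c * |t|)| := by
    intro c; rcases abs_choice t with h | h <;> simp [h, sin_neg]
  have hcos : ∀ c : ℝ, |cos (c * t)| = |cos (c * |t|)| := by
    intro c; rcases abs_choice t with h | h <;> simp [h, cos_neg]
  have hv : v = t + π / 2 + j * π := by ring
  have hNv : ((k + k : ℕ) : ℝ) * v = (k + k : ℕ) * t + ((k + (k + k) * j : ℤ) : ℝ) * π := by
    rw [hv]
    push_cast
    ring
  refine ⟨|t|, ⟨abs_nonneg t, ht⟩, ?_, ?_, ?_, ?_⟩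
  · rw [hv, abs_sin_add_int_mul_pi, sin_add_pi_div_two, cos_abs,
      abs_of_nonneg (cos_nonneg_of_mem_Icc (abs_le.mp ht))]
  · rw [hv, abs_cos_add_int_mul_pi, cos_add_pi_div_two, abs_neg,
      abs_sin_eq_sin_abs_of_abs_le_pi (by linarith [pi_pos])]
  · rw [hNv, abs_sin_add_int_mul_pi, hsin]
  · rw [hNv, abs_cos_add_int_mul_pi, hcos]

theorem abs_sin_mul_abs_sin_le_cot_sq {N : ℕ} (hN : Even N) (hN₂ : 2 ≤ N) {θ v : ℝ}
    (hθ : (N + 1) * θ = π / 2) (hv : cot θ * |cos v| < |sin v|) :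
    |sin v| * |sin (N * v)| ≤ cot θ ^ 2 * (|cos v| * |cos (N * v)|) := by
  have hN₂' : (2 : ℝ) ≤ N := by exact_mod_cast hN₂
  have hθ₀ : 0 < θ := by nlinarith [pi_pos]
  have hsinθ : 0 < sin θ := sin_pos_of_pos_of_lt_pi hθ₀ (by nlinarith [pi_pos])
  obtain ⟨ψ, ⟨hψ₀, hψ⟩, hs, hc, hNs, hNc⟩ := exists_mem_Icc_abs_sin_eq_cos hN v
  rw [hs, hc] at hv
  rw [hs, hc, hNs, hNc]
  have hψθ : ψ ≤ θ := by
    by_contra! h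
    have : 0 ≤ sin (ψ - θ) := sin_nonneg_of_nonneg_of_le_pi (by linarith) (by linarith)
    rw [cot_eq_cos_div_sin, div_mul_eq_mul_div, div_lt_iff₀ hsinθ] at hv
    rw [sin_sub] at this
    linarith
  have hNψ : N * ψ ∈ Set.Icc 0 (π / 2) := ⟨by positivity, by nlinarith⟩
  rw [abs_of_nonneg (sin_nonneg_of_nonneg_of_le_pi hNψ.1 (by linarith [hNψ.2, pi_pos])),
    abs_of_nonneg (cos_nonneg_of_mem_Icc ⟨by linarith [hNψ.1, pi_pos], hNψ.2⟩)]
  exact cos_mul_sin_mul_le_cot_sq hN₂' hθ hψ₀ hψθ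

section TangentChain

variable {A : ℝ} {S C : ℕ → ℝ}

theorem prod_le_pow_mul_prod_mul_max (hA : 0 ≤ A) (hS : ∀ i, 0 ≤ S i) (hC : ∀ i, 0 ≤ C i)
    (hpair : ∀ i, A * C i < S i → S i * S (i + 1) ≤ A ^ 2 * (C i * C (i + 1))) (M : ℕ) :
    ∏ i ∈ range (M + 1), S i ≤ A ^ M * (∏ i ∈ range M, C i) * max (A * C M) (S M) := by
  induction M with
  | zero => simp
  | succ M ih =>
    have hprod : 0 ≤ ∏ i ∈ range M, C i := prod_nonneg fun i _ => hC i
    have hP : 0 ≤ A ^ M * ∏ i ∈ range M, C i := mul_nonneg (pow_nonneg hA M) hprod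
    have hP' : 0 ≤ A ^ (M + 1) * ((∏ i ∈ range M, C i) * C M) :=
      mul_nonneg (pow_nonneg hA _) (mul_nonneg hprod (hC M))
    rw [prod_range_succ _ (M + 1), prod_range_succ C M]
    rcases le_or_gt (S M) (A * C M) with h | h
    · rw [max_eq_left h] at ih
      calc _ ≤ A ^ M * (∏ i ∈ range M, C i) * (A * C M) * S (M + 1) :=
            mul_le_mul_of_nonneg_right ih (hS _)
        _ = A ^ (M + 1) * ((∏ i ∈ range M, C i) * C M) * S (M + 1) := by ring
        _ ≤ _ := mul_le_mul_of_nonneg_left (le_max_right _ _) hP'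
    · rw [max_eq_right h.le] at ih
      calc _ ≤ A ^ M * (∏ i ∈ range M, C i) * S M * S (M + 1) :=
            mul_le_mul_of_nonneg_right ih (hS _)
        _ = A ^ M * (∏ i ∈ range M, C i) * (S M * S (M + 1)) := by ring
        _ ≤ A ^ M * (∏ i ∈ range M, C i) * (A ^ 2 * (C M * C (M + 1))) :=
            mul_le_mul_of_nonneg_left (hpair M h) hP
        _ = A ^ (M + 1) * ((∏ i ∈ range M, C i) * C M) * (A * C (M + 1)) := by ring
        _ ≤ _ := mul_le_mul_of_nonneg_left (le_max_left _ _) hP'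

theorem prod_le_pow_succ_mul_prod (hA : 1 ≤ A) (hS : ∀ i, 0 ≤ S i) (hC : ∀ i, 0 ≤ C i)
    (hS₁ : ∀ i, S i ≤ 1) (hC₁ : ∀ i, C i ≤ 1)
    (hpair : ∀ i, A * C i < S i → S i * S (i + 1) ≤ A ^ 2 * (C i * C (i + 1))) (M : ℕ) :
    ∏ i ∈ range (M + 1), S i ≤ A ^ (M + 1) * ∏ i ∈ range M, C i := by
  have hmax : max (A * C M) (S M) ≤ A :=
    max_le (mul_le_of_le_one_right (by linarith) (hC₁ M)) ((hS₁ M).trans hA)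
  calc _ ≤ A ^ M * (∏ i ∈ range M, C i) * max (A * C M) (S M) :=
        prod_le_pow_mul_prod_mul_max (by linarith) hS hC hpair M
    _ ≤ A ^ M * (∏ i ∈ range M, C i) * A :=
        mul_le_mul_of_nonneg_left hmax
          (mul_nonneg (pow_nonneg (by linarith) M) (prod_nonneg fun i _ => hC i))
    _ = A ^ (M + 1) * ∏ i ∈ range M, C i := by ring

/-- Since `S 0 ^ 2 + C 0 ^ 2 = 1`, one of `S 0`, `C 0` is at least `1/2`; either can absorb the
missing first factor. -/
theorem prod_succ_le_two_mul_pow_mul_prod (hA : 1 ≤ A) (hS : ∀ i, 0 ≤ S i)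
    (hC : ∀ i, 0 ≤ C i)
    (hS₁ : ∀ i, S i ≤ 1) (hC₁ : ∀ i, C i ≤ 1) (hSC₀ : S 0 ^ 2 + C 0 ^ 2 = 1)
    (hpair : ∀ i, A * C i < S i → S i * S (i + 1) ≤ A ^ 2 * (C i * C (i + 1))) (M : ℕ) :
    ∏ i ∈ range M, S (i + 1) ≤ 2 * A ^ (M + 1) * ∏ i ∈ range M, C i := by
  have hSsucc : 0 ≤ ∏ i ∈ range M, S (i + 1) := prod_nonneg fun i _ => hS _
  rcases le_or_gt (1 / 2) (S 0) with h | h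
  · calc _ ≤ 2 * S 0 * ∏ i ∈ range M, S (i + 1) := le_mul_of_one_le_left hSsucc (by linarith)
      _ = 2 * ∏ i ∈ range (M + 1), S i := by rw [prod_range_succ']; ring
      _ ≤ _ := by
        rw [mul_assoc]; gcongr; exact prod_le_pow_succ_mul_prod hA hS hC hS₁ hC₁ hpair M
  · have hC₀ : 1 / 2 ≤ C 0 := by nlinarith [hS 0, hC 0]
    cases M with
    | zero => simp; linarith
    | succ M =>
      have hshift := prod_le_pow_succ_mul_prod hA (fun i => hS (i + 1)) (fun i => hC (i + 1))
        (fun i => hS₁ (i + 1)) (fun i => hC₁ (i + 1)) (fun i => hpair (i + 1)) M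
      have hCsucc : 0 ≤ ∏ i ∈ range M, C (i + 1) := prod_nonneg fun i _ => hC _
      calc _ ≤ A ^ (M + 1) * ∏ i ∈ range M, C (i + 1) := hshift
        _ ≤ A ^ (M + 1 + 1) * (2 * C 0 * ∏ i ∈ range M, C (i + 1)) := by
          gcongr
          · omega
          · exact le_mul_of_one_le_left hCsucc (by linarith)
        _ = _ := by rw [prod_range_succ' C]; ring

end TangentChain

theorem pert_add_of_dvd {n k : ℕ} (h : n ∣ k) (j : ℕ) : pert n (k + j) = pert n j := by
  simp only [pert, Nat.dvd_add_right h]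

theorem PiProd_nonneg (r : ℕ) (γ : ℕ → ℕ) (α : ℝ) : 0 ≤ PiProd r γ α :=
  prod_nonneg fun _ _ => abs_nonneg _

theorem PiProd_le_one (r : ℕ) (γ : ℕ → ℕ) (α : ℝ) : PiProd r γ α ≤ 1 :=
  prod_le_one (fun _ _ => abs_nonneg _) fun _ _ => abs_cos_le_one _

theorem PiProd_add (a b : ℕ) (γ : ℕ → ℕ) (α : ℝ) :
    PiProd (a + b) γ α = PiProd a γ α * PiProd b (fun j => γ (a + j)) (2 ^ a * α) := by
  rw [PiProd, prod_range_add]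
  congr 1
  refine prod_congr rfl fun j _ => ?_
  rw [pow_add]
  ring_nf

theorem PiProd_le_of_le {a b : ℕ} (h : a ≤ b) (γ : ℕ → ℕ) (α : ℝ) :
    PiProd b γ α ≤ PiProd a γ α := by
  obtain ⟨c, rfl⟩ := Nat.exists_eq_add_of_le h
  rw [PiProd_add]
  exact mul_le_of_le_one_right (PiProd_nonneg _ _ _) (PiProd_le_one _ _ _)

theorem PiProd_pert_mul (n m : ℕ) (β : ℝ) :
    PiProd (n * m) (pert n) β = ∏ i ∈ range m, PiProd n (pert n) (2 ^ (n * i) * β) := by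
  induction m with
  | zero => simp [PiProd]
  | succ m ih =>
    rw [Nat.mul_succ, PiProd_add, ih, prod_range_succ]
    simp only [pert_add_of_dvd (dvd_mul_right n m)]

theorem PiProd_pert_succ (k : ℕ) (β : ℝ) :
    PiProd (k + 1) (pert (k + 1)) β =
      |sin (β * π)| * ∏ j ∈ range k, |cos (2 ^ (j + 1) * β * π)| := by
  rw [PiProd, prod_range_succ', mul_comm]
  congr 1
  · simp [pert, cos_add_pi_div_two]
  · refine prod_congr rfl fun j hj => ?_
    have : ¬ k + 1 ∣ j + 1 := fun h => by
      have := Nat.le_of_dvd j.succ_pos h; simp at hj; omega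
    simp [pert, this]

theorem PiProd_pert_le_abs_sin {n : ℕ} (hn : 1 ≤ n) (β : ℝ) :
    PiProd n (pert n) β ≤ |sin (β * π)| := by
  obtain ⟨k, rfl⟩ := Nat.exists_eq_add_of_le' hn
  rw [PiProd_pert_succ]
  exact mul_le_of_le_one_right (abs_nonneg _)
    (prod_le_one (fun _ _ => abs_nonneg _) fun _ _ => abs_cos_le_one _)

theorem two_pow_mul_abs_cos_mul_PiProd_pert {n : ℕ} (hn : 1 ≤ n) (β : ℝ) :
    2 ^ n * |cos (β * π)| * PiProd n (pert n) β = |sin (2 ^ n * β * π)| := by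
  obtain ⟨k, rfl⟩ := Nat.exists_eq_add_of_le' hn
  rw [PiProd_pert_succ, mul_assoc _ β, sin_two_pow_mul, prod_range_succ', abs_mul, abs_mul,
    abs_mul, abs_prod, abs_of_pos (by positivity : (0:ℝ) < 2 ^ (k + 1))]
  simp only [pow_zero, one_mul, mul_assoc]
  ring

theorem one_le_cot_of_add_one_mul_eq {N θ : ℝ} (hN : 1 ≤ N) (hθ : (N + 1) * θ = π / 2) :
    1 ≤ cot θ := by
  have hθ₀ : 0 < θ := by nlinarith [pi_pos]
  have hsin : 0 < sin θ := sin_pos_of_pos_of_lt_pi hθ₀ (by nlinarith [pi_pos])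
  rw [cot_eq_cos_div_sin, one_le_div hsin, ← sin_pi_div_two_sub]
  exact sin_le_sin_of_le_of_le_pi_div_two (by linarith [pi_pos]) (by linarith) (by nlinarith)

theorem prod_abs_sin_two_pow_le {n : ℕ} (hn : 1 ≤ n) {θ : ℝ}
    (hθ : ((2:ℝ) ^ n + 1) * θ = π / 2) (β : ℝ) (m : ℕ) :
    ∏ i ∈ range m, |sin (2 ^ (n * (i + 1)) * β * π)| ≤
      2 * cot θ ^ (m + 1) * ∏ i ∈ range m, |cos (2 ^ (n * i) * β * π)| := by
  have h2n : 2 ≤ 2 ^ n := by simpa using Nat.pow_le_pow_right two_pos hn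
  have hstep : ∀ i, (2:ℝ) ^ n * 2 ^ (n * i) * β * π = 2 ^ (n * (i + 1)) * β * π := by
    intro i; rw [Nat.mul_succ, pow_add]; ring
  refine prod_succ_le_two_mul_pow_mul_prod (S := fun i => |sin (2 ^ (n * i) * β * π)|)
    (C := fun i => |cos (2 ^ (n * i) * β * π)|)
    (one_le_cot_of_add_one_mul_eq (by exact_mod_cast h2n.trans' one_le_two) hθ)
    (fun _ => abs_nonneg _) (fun _ => abs_nonneg _) (fun _ => abs_sin_le_one _)
    (fun _ => abs_cos_le_one _) (by simp) (fun i h => ?_) m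
  have := abs_sin_mul_abs_sin_le_cot_sq (N := 2 ^ n) (Nat.even_pow.2 ⟨even_two, by omega⟩) h2n
    (by push_cast; exact hθ) h
  simpa only [Nat.cast_pow, Nat.cast_ofNat, ← mul_assoc, hstep] using this

theorem PiProd_pert_mul_two_pow_le {n : ℕ} (hn : 1 ≤ n) {θ : ℝ}
    (hθ : ((2:ℝ) ^ n + 1) * θ = π / 2) (β : ℝ) (m : ℕ) :
    PiProd (n * m) (pert n) β * 2 ^ (n * m) ≤ 2 ^ (n + 1) * cot θ ^ m := by
  have hA := one_le_cot_of_add_one_mul_eq (by simpa using one_le_pow₀ one_le_two) hθ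
  set S : ℕ → ℝ := fun i => |sin (2 ^ (n * i) * β * π)|
  set C : ℕ → ℝ := fun i => |cos (2 ^ (n * i) * β * π)|
  set B : ℕ → ℝ := fun i => PiProd n (pert n) (2 ^ (n * i) * β)
  have hBC : ∀ i, 2 ^ n * C i * B i = S (i + 1) := fun i => by
    simp only [S, C, B]
    rw [two_pow_mul_abs_cos_mul_PiProd_pert hn, ← mul_assoc, ← pow_add, add_comm,
      ← Nat.mul_succ]
  cases m with
  | zero => simpa [PiProd] using one_le_pow₀ one_le_two
  | succ m =>
    rw [PiProd_pert_mul]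
    by_cases hz : ∃ i < m, C i = 0
    · obtain ⟨i, hi, hCi⟩ := hz
      have hB : B (i + 1) = 0 := le_antisymm
        ((PiProd_pert_le_abs_sin hn _).trans (by show S (i + 1) ≤ 0; rw [← hBC i, hCi]; simp))
        (PiProd_nonneg _ _ _)
      rw [prod_eq_zero (mem_range.2 (by omega : i + 1 < m + 1)) hB, zero_mul]
      positivity
    push Not at hz
    have hCpos : 0 < ∏ i ∈ range m, C i :=
      prod_pos fun i hi => (abs_nonneg _).lt_of_ne' (hz i (mem_range.1 hi))
    have hid : (∏ i ∈ range m, B i) * 2 ^ (n * m) * ∏ i ∈ range m, C i =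
        ∏ i ∈ range m, S (i + 1) := by
      simp_rw [← hBC]
      rw [prod_mul_distrib, prod_mul_distrib, prod_const, card_range, pow_mul]
      ring
    have hm : (∏ i ∈ range m, B i) * 2 ^ (n * m) ≤ 2 * cot θ ^ (m + 1) :=
      le_of_mul_le_mul_right (hid ▸ prod_abs_sin_two_pow_le hn hθ β m) hCpos
    have hBm : B m ≤ 1 := PiProd_le_one _ _ _
    have hBm₀ : 0 ≤ B m := PiProd_nonneg _ _ _
    calc (∏ i ∈ range (m + 1), B i) * 2 ^ (n * (m + 1))
        = (∏ i ∈ range m, B i) * 2 ^ (n * m) * 2 ^ n * B m := by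
          rw [prod_range_succ, Nat.mul_succ, pow_add]; ring
      _ ≤ 2 * cot θ ^ (m + 1) * 2 ^ n * 1 := by gcongr
      _ = 2 ^ (n + 1) * cot θ ^ (m + 1) := by ring

theorem Nat.exists_lt_dvd_add {n : ℕ} (hn : 0 < n) (l : ℕ) : ∃ d < n, n ∣ d + l := by
  refine ⟨(n - l % n) % n, Nat.mod_lt _ hn, ?_⟩
  rw [Nat.dvd_iff_mod_eq_zero, Nat.mod_add_mod, ← Nat.add_mod_mod,
    Nat.sub_add_cancel (Nat.mod_lt l hn).le, Nat.mod_self]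

theorem PiProd_le_PiProd_pert {n d l : ℕ} (h : n ∣ d + l) (r : ℕ) (α : ℝ) :
    PiProd r (fun j => pert n (j + l)) α ≤ PiProd (n * ((r - d) / n)) (pert n) (2 ^ d * α) := by
  rcases lt_or_ge r d with hr | hr
  · rw [Nat.sub_eq_zero_of_le hr.le, Nat.zero_div, mul_zero]
    exact PiProd_le_one _ _ _
  · calc _ ≤ PiProd (d + n * ((r - d) / n)) (fun j => pert n (j + l)) α :=
          PiProd_le_of_le (by have := Nat.mul_div_le (r - d) n; omega) _ _
      _ = PiProd d (fun j => pert n (j + l)) α *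
            PiProd (n * ((r - d) / n)) (pert n) (2 ^ d * α) := by
          rw [PiProd_add]
          simp only [add_right_comm d _ l, pert_add_of_dvd h]
      _ ≤ _ := mul_le_of_le_one_left (PiProd_nonneg _ _ _) (PiProd_le_one _ _ _)

theorem exists_PiProd_le_PiProd_pert {n : ℕ} (hn : 0 < n) (r l : ℕ) (α : ℝ) :
    ∃ m β, n * m ≤ r ∧ r ≤ n * m + 2 * n ∧
      PiProd r (fun j => pert n (j + l)) α ≤ PiProd (n * m) (pert n) β := by
  obtain ⟨d, hd, hdl⟩ := Nat.exists_lt_dvd_add hn l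
  have hmr := Nat.mul_div_le (r - d) n
  have hrm := Nat.lt_mul_div_succ (r - d) hn
  rw [Nat.mul_succ] at hrm
  exact ⟨(r - d) / n, 2 ^ d * α, by omega, by omega, PiProd_le_PiProd_pert hdl r α⟩

/-- Theorem 3.1, first part: for all `α ∈ [0,1]`, `r ≥ 1` and shifts `ℓ`,
`Π_{r,c^{(ℓ)}}(α) ≤ C(n)·2^{-r}·(cot(π/(2(2^n+1))))^{r/n}`. -/
theorem PiProd_le_cot_pow (n : ℕ) (hn : 1 ≤ n) :
    ∃ C > (0:ℝ), ∀ α ∈ Set.Icc (0:ℝ) 1, ∀ r : ℕ, 1 ≤ r → ∀ l : ℕ,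
      PiProd r (fun j => pert n (j + l)) α ≤
        C * (2:ℝ) ^ (-(r:ℝ)) *
          Real.cot (π / (2 * (2 ^ n + 1))) ^ ((r : ℝ) / (n : ℝ)) := by
  set θ := π / (2 * (2 ^ n + 1))
  have hθ : ((2:ℝ) ^ n + 1) * θ = π / 2 := by simp only [θ]; field_simp
  have hA := one_le_cot_of_add_one_mul_eq (by simpa using one_le_pow₀ one_le_two) hθ
  refine ⟨2 ^ (3 * n + 1), by positivity, fun α _ r _ l => ?_⟩
  obtain ⟨m, β, hmr, hrm, hle⟩ := exists_PiProd_le_PiProd_pert hn r l α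
  have hcot : cot θ ^ m ≤ cot θ ^ ((r : ℝ) / n) := by
    rw [← rpow_natCast]
    refine rpow_le_rpow_of_exponent_le hA ?_
    rw [le_div_iff₀ (by positivity)]
    exact_mod_cast (mul_comm n m ▸ hmr)
  calc PiProd r (fun j => pert n (j + l)) α
      ≤ 2 ^ (n + 1) * cot θ ^ m / 2 ^ (n * m) := by
        rw [le_div_iff₀ (by positivity)]
        exact (mul_le_mul_of_nonneg_right hle (by positivity)).trans
          (PiProd_pert_mul_two_pow_le hn hθ β m)
    _ = 2 ^ (3 * n + 1) * ((2:ℝ) ^ (n * m + 2 * n))⁻¹ * cot θ ^ m := by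
      field_simp
      ring
    _ ≤ 2 ^ (3 * n + 1) * ((2:ℝ) ^ r)⁻¹ * cot θ ^ ((r : ℝ) / n) := by
      gcongr
      norm_num
    _ = _ := by rw [rpow_neg zero_le_two, rpow_natCast]

end
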